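/- Suppose all n players use protocol Q. For any j ∈ {1, …, k}, if the number of pending players at the start of interval I_j is at most n_j, then with probability at least 1 − exp(−β^{j+2} n / 3), the number of pending players at the end of interval I_j is at most n_{j+1}. -/

import Mathlib

open scoped ENNReal

namespace Contention

/-- An acknowledgment-based protocol: maps a player's personal transmission history
(the list of her own past transmission indicators, oldest slot first) to the
probability of transmitting in the next slot. -/
abbrev Protocol : Type := List Bool → ℝ

/-- A protocol is valid if it always prescribes a probability in `[0,1]`. -/
def ValidProtocol (f : Protocol) : Prop := ∀ h : List Bool, 0 ≤ f h ∧ f h ≤ 1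

/-- A joint transmission history: the list of transmission vectors, oldest slot first. -/
abbrev Hist (n : ℕ) : Type := List (Fin n → Bool)

/-- The personal transmission history of player `i` extracted from a joint history. -/
def personal {n : ℕ} (h : Hist n) (i : Fin n) : List Bool := h.map fun v => v i

/-- Player `i` transmits alone (hence successfully) in the slot with transmission vector `v`. -/
def alone {n : ℕ} (v : Fin n → Bool) (i : Fin n) : Prop :=
  v i = true ∧ ∀ j : Fin n, j ≠ i → v j = false

instance {n : ℕ} (v : Fin n → Bool) (i : Fin n) : Decidable (alone v i) := by
  unfold alone; infer_instance

/-- Player `i` is still pending after joint history `h` (she never transmitted alone). -/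
def pending {n : ℕ} (h : Hist n) (i : Fin n) : Prop := ∀ v ∈ h, ¬ alone v i

instance {n : ℕ} (h : Hist n) (i : Fin n) : Decidable (pending h i) := by
  unfold pending; infer_instance

/-- Probability that the next slot has transmission vector `v`, given joint history `h`:
each pending player transmits independently with the probability her protocol assigns to
her personal history, and players that already succeeded stay quiet. -/
noncomputable def stepProb {n : ℕ} (F : Fin n → Protocol) (h : Hist n) (v : Fin n → Bool) : ℝ :=
  ∏ i : Fin n,
    if pending h i then
      (if v i = true then F i (personal h i) else 1 - F i (personal h i))
    else
      (if v i = true then 0 else 1)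

/-- Probability that, starting after joint history `h`, the next `e.length` slots produce
exactly the extension `e`. -/
noncomputable def contProb {n : ℕ} (F : Fin n → Protocol) (h e : Hist n) : ℝ :=
  ∏ t ∈ Finset.range e.length, stepProb F (h ++ e.take t) (e.getD t fun _ => false)

/-- Probability that the first `h.length` slots produce exactly the joint history `h`. -/
noncomputable def histProb {n : ℕ} (F : Fin n → Protocol) (h : Hist n) : ℝ := contProb F [] h

/-- Conditional probability, given joint history `h`, that player `i` is still pending
after `s` further slots. -/
noncomputable def condPendProb {n : ℕ} (F : Fin n → Protocol) (h : Hist n) (i : Fin n)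
    (s : ℕ) : ℝ :=
  ∑ e : Fin s → Fin n → Bool,
    if pending (h ++ List.ofFn e) i then contProb F h (List.ofFn e) else 0

/-- Conditional expected latency `E[Tᵢ | h]` of player `i` given joint history `h`
(`Tᵢ` is the first slot in which `i` transmits alone), computed via
`E[Tᵢ | h] = ∑_{s ≥ 0} Pr(Tᵢ > s | h)`; for `s ≤ h.length` the event `Tᵢ > s` is
determined by `h`, and for larger `s` its probability is `condPendProb`. -/
noncomputable def condLatency {n : ℕ} (F : Fin n → Protocol) (h : Hist n) (i : Fin n) : ℝ≥0∞ :=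
  ∑' s : ℕ,
    if s ≤ h.length then (if pending (h.take s) i then 1 else 0)
    else ENNReal.ofReal (condPendProb F h i (s - h.length))

/-- Conditional expected number of further slots until player `i` succeeds, given joint
history `h` (the slot of the successful transmission itself is counted). -/
noncomputable def condRemaining {n : ℕ} (F : Fin n → Protocol) (h : Hist n) (i : Fin n) : ℝ≥0∞ :=
  ∑' s : ℕ, ENNReal.ofReal (condPendProb F h i s)

/-- A profile of protocols is in equilibrium if after no joint history (arising with
positive probability) can a player strictly decrease her conditional expected latency
by unilaterally switching to another (valid) protocol. -/
def IsEquilibrium {n : ℕ} (F : Fin n → Protocol) : Prop :=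
  ∀ i : Fin n, ∀ h : Hist n, 0 < histProb F h →
    ∀ g : Protocol, ValidProtocol g →
      condLatency F h i ≤ condLatency (Function.update F i g) h i

end Contention

namespace Contention

/-- An age-based protocol: the transmission probability in slot `t` (that is, after a
personal history of length `t − 1`) is `p t`, depending only on the time `t ≥ 1`. -/
def ageProtocol (p : ℕ → ℝ) : Protocol := fun h => p (h.length + 1)

end Contention

namespace Contention

/-- `nj β n j = βʲ·n`, the target number of pending players for interval `Iⱼ`. -/
noncomputable def nj (β : ℝ) (n : ℕ) (j : ℕ) : ℝ := β ^ j * n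

/-- The length `ℓⱼ` of interval `Iⱼ`: `⌊(e/β)·nⱼ⌋` for `j ≤ k`, and `n` for `j = k+1`. -/
noncomputable def intervalLen (β : ℝ) (n k : ℕ) (j : ℕ) : ℕ :=
  if j ≤ k then ⌊(Real.exp 1 / β) * nj β n j⌋₊ else n

/-- The total length `ℓ₁ + ⋯ + ℓⱼ` of the first `j` intervals, so interval `Iⱼ` consists
of the slots `t` with `cumLen (j-1) < t ≤ cumLen j`. -/
noncomputable def cumLen (β : ℝ) (n k : ℕ) (j : ℕ) : ℕ :=
  ∑ j' ∈ Finset.Icc 1 j, intervalLen β n k j'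

/-- The deadline `t₀ = 1 + ℓ₁ + ⋯ + ℓ_{k+1}` of protocol `Q`. -/
noncomputable def deadline (β : ℝ) (n k : ℕ) : ℕ := 1 + cumLen β n k (k + 1)

/-- `QSpec β n k p` says that the age-based sequence `p` is the protocol `Q`: it transmits
with probability `1/nⱼ` in every slot of interval `Iⱼ` (for `j = 1, …, k+1`) and with
probability `1` in every slot `t ≥ t₀`. -/
def QSpec (β : ℝ) (n k : ℕ) (p : ℕ → ℝ) : Prop :=
  (∀ j : ℕ, 1 ≤ j → j ≤ k + 1 →
    ∀ t : ℕ, cumLen β n k (j - 1) < t → t ≤ cumLen β n k j → p t = 1 / nj β n j) ∧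
  (∀ t : ℕ, deadline β n k ≤ t → p t = 1)

/-- The number of pending players after joint history `h`. -/
def pendCount {n : ℕ} (h : Hist n) : ℕ := (Finset.univ.filter fun i : Fin n => pending h i).card

open Classical in
/-- The conditional probability, given joint history `h`, that the joint history after `s`
further slots satisfies property `P`. -/
noncomputable def condEvProb {n : ℕ} (F : Fin n → Protocol) (h : Hist n) (s : ℕ)
    (P : Hist n → Prop) : ℝ :=
  ∑ e : Fin s → Fin n → Bool,
    if P (h ++ List.ofFn e) then contProb F h (List.ofFn e) else 0

end Contention

/-!
While every pending player transmits with probability `1/N` and `m` players are pending, with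
`βN < m ≤ N`, a slot is successful with probability at least `(m/N)(1 - 1/N)^(m-1) ≥ β/e`.
Hence the potential `(1 - β)^(βN - m)` (set to `0` once `m ≤ βN`) shrinks in expectation by
the factor `1 - β²/e` per slot, and Markov's inequality bounds the probability that more than
`βN` players survive the `ℓ ≥ eN/β - 1` slots of the interval by
`(1 - β)^(-(1 - β)N) (1 - β²/e)^ℓ ≤ exp(-β²N/3)`, using `(1 - β) log (1 - β) ≥ -β + β²/2 + β³/6`.
With `N = nⱼ` this is the claim.
-/

namespace Contention

section Estimates

lemma exp_neg_one_le_one_sub_one_div_pow {N : ℝ} {m : ℕ} (hN : 1 < N) (hm : (m : ℝ) ≤ N) :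
    Real.exp (-1) ≤ (1 - 1 / N) ^ (m - 1) := by
  have hN1 : 0 < N - 1 := by linarith
  have hbase : Real.exp (-(1 / (N - 1))) ≤ 1 - 1 / N :=
    calc Real.exp (-(1 / (N - 1))) = (Real.exp (1 / (N - 1)))⁻¹ := Real.exp_neg _
      _ ≤ (1 / (N - 1) + 1)⁻¹ := inv_anti₀ (by positivity) (Real.add_one_le_exp _)
      _ = 1 - 1 / N := by field_simp; ring
  calc Real.exp (-1) ≤ Real.exp (-(1 / (N - 1))) ^ (m - 1) := by
        rw [← Real.exp_nat_mul, Real.exp_le_exp]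
        rcases Nat.eq_zero_or_pos m with rfl | hm0
        · norm_num
        rw [Nat.cast_sub hm0, mul_neg, mul_one_div, neg_le_neg_iff, div_le_one hN1]
        push_cast
        linarith
    _ ≤ (1 - 1 / N) ^ (m - 1) := pow_le_pow_left₀ (Real.exp_pos _).le hbase _

lemma add_sq_div_two_le_neg_log_one_sub {x : ℝ} (hx0 : 0 ≤ x) (hx1 : x < 1) :
    x + x ^ 2 / 2 ≤ -Real.log (1 - x) := by
  have hsum := Real.hasSum_pow_div_log_of_abs_lt_one (abs_lt.2 ⟨by linarith, hx1⟩)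
  have := sum_le_hasSum (Finset.range 2) (fun i _ => by positivity) hsum
  norm_num [Finset.sum_range_succ] at this
  linarith

lemma sq_div_two_add_cube_div_six_le {x : ℝ} (hx0 : 0 ≤ x) (hx1 : x < 1) :
    x ^ 2 / 2 + x ^ 3 / 6 ≤ x + (1 - x) * Real.log (1 - x) := by
  let g : ℝ → ℝ := fun y => y + (1 - y) * Real.log (1 - y) - y ^ 2 / 2 - y ^ 3 / 6
  have hderiv : ∀ y < 1, HasDerivAt g (-Real.log (1 - y) - y - y ^ 2 / 2) y := by
    intro y hy
    have h1 : HasDerivAt (fun y => 1 - y) (-1) y := by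
      simpa using (hasDerivAt_id' y).const_sub 1
    have hy' : 1 - y ≠ 0 := (sub_pos.2 hy).ne'
    have h2 := h1.log hy'
    refine ((((hasDerivAt_id' y).add (h1.mul h2)).sub ((hasDerivAt_pow 2 y).div_const 2)).sub
      ((hasDerivAt_pow 3 y).div_const 6)).congr_deriv ?_
    field_simp
    ring
  have hmono : MonotoneOn g (Set.Ico 0 1) := by
    refine monotoneOn_of_hasDerivWithinAt_nonneg (convex_Ico 0 1)
      (fun y hy => (hderiv y hy.2).continuousAt.continuousWithinAt)
      (fun y hy => (hderiv y (interior_subset hy).2).hasDerivWithinAt) fun y hy => ?_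
    rw [interior_Ico] at hy
    linarith [add_sq_div_two_le_neg_log_one_sub hy.1.le hy.2]
  have := hmono ⟨le_rfl, zero_lt_one⟩ ⟨hx0, hx1⟩ hx0
  simp only [g] at this
  norm_num at this
  linarith

lemma one_sub_sq_mul_exp_neg_one_nonneg {β : ℝ} (hβ0 : 0 ≤ β) (hβ1 : β ≤ 1) :
    0 ≤ 1 - β ^ 2 * Real.exp (-1) := by
  nlinarith [Real.exp_neg_one_lt_half, Real.exp_pos (-1)]

lemma exp_mul_one_sub_pow_le {β N m : ℝ} {ℓ : ℕ} (hβ0 : 0 < β) (hβ1 : β < 1)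
    (hN : Real.sqrt 2 < N) (hβN : 1 < β * N) (hm : m ≤ N)
    (hℓ : Real.exp 1 / β * N - 1 ≤ ℓ) :
    Real.exp (-Real.log (1 - β) * (m - β * N)) * (1 - β ^ 2 * Real.exp (-1)) ^ ℓ ≤
      Real.exp (-(β ^ 2 * N) / 3) := by
  set E := Real.exp (-1)
  have hE : E * Real.exp 1 = 1 := by rw [← Real.exp_add]; simp
  have hE0 : 0 < E := Real.exp_pos _
  have hrate : 0 ≤ -Real.log (1 - β) := neg_nonneg.2 (Real.log_nonpos (by linarith) (by linarith))
  have hpow : (1 - β ^ 2 * E) ^ ℓ ≤ Real.exp (-(β ^ 2 * E) * ℓ) := by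
    rw [mul_comm (-(β ^ 2 * E)), Real.exp_nat_mul]
    exact pow_le_pow_left₀ (one_sub_sq_mul_exp_neg_one_nonneg hβ0.le hβ1.le)
      (Real.one_sub_le_exp_neg _) _
  have hdrift : -Real.log (1 - β) * (m - β * N) ≤ (β - β ^ 2 / 2 - β ^ 3 / 6) * N := by
    have := sq_div_two_add_cube_div_six_le hβ0.le hβ1
    nlinarith [mul_le_mul_of_nonneg_left (sub_le_sub_right hm (β * N)) hrate]
  have hlen : β * N - β ^ 2 * E ≤ β ^ 2 * E * ℓ := by
    have := mul_le_mul_of_nonneg_left hℓ (by positivity : 0 ≤ β ^ 2 * E)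
    have hid : β ^ 2 * E * (Real.exp 1 / β * N - 1) = β * N * (E * Real.exp 1) - β ^ 2 * E := by
      field_simp
    rw [hE, mul_one] at hid
    linarith
  -- `e (√2 + 1) > 6` is what absorbs the loss `β²/e` from rounding `ℓ` down.
  have hsix : 6 * E ≤ N * (1 + β) := by
    have hsqrt : (1.414 : ℝ) < Real.sqrt 2 := by
      rw [Real.lt_sqrt (by norm_num)]; norm_num
    have he := Real.exp_one_gt_d9
    nlinarith
  calc Real.exp (-Real.log (1 - β) * (m - β * N)) * (1 - β ^ 2 * E) ^ ℓ
      ≤ Real.exp (-Real.log (1 - β) * (m - β * N)) * Real.exp (-(β ^ 2 * E) * ℓ) :=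
        mul_le_mul_of_nonneg_left hpow (Real.exp_pos _).le
    _ = Real.exp (-Real.log (1 - β) * (m - β * N) - β ^ 2 * E * ℓ) := by
        rw [← Real.exp_add]; ring_nf
    _ ≤ Real.exp (-(β ^ 2 * N) / 3) := by
        rw [Real.exp_le_exp]
        nlinarith [mul_le_mul_of_nonneg_left hsix (sq_nonneg β)]

end Estimates

variable {n : ℕ}

section Histories

lemma pending_append {h e : Hist n} {i : Fin n} :
    pending (h ++ e) i ↔ pending h i ∧ pending e i := by
  simp [pending, or_imp, forall_and]

lemma pending_concat {h : Hist n} {v : Fin n → Bool} {i : Fin n} :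
    pending (h ++ [v]) i ↔ pending h i ∧ ¬ alone v i := by
  rw [pending_append]
  simp [pending]

lemma pendCount_append_le (h e : Hist n) : pendCount (h ++ e) ≤ pendCount h :=
  Finset.card_le_card fun _ hi => by
    simp only [Finset.mem_filter, pending_append] at hi ⊢
    exact ⟨hi.1, hi.2.1⟩

lemma eq_of_alone_of_alone {v : Fin n → Bool} {i i' : Fin n} (hi : alone v i)
    (hi' : alone v i') : i' = i := by
  by_contra hne
  simpa [hi.1] using hi'.2 i (Ne.symm hne)

lemma pendCount_concat_of_alone {h : Hist n} {v : Fin n → Bool} {i : Fin n}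
    (hi : pending h i) (hv : alone v i) : pendCount (h ++ [v]) = pendCount h - 1 := by
  have hset : Finset.univ.filter (fun i' => pending (h ++ [v]) i') =
      (Finset.univ.filter fun i' => pending h i').erase i := by
    ext i'
    simp only [Finset.mem_erase, Finset.mem_filter, Finset.mem_univ, true_and, pending_concat]
    exact ⟨fun ⟨hp, hna⟩ => ⟨fun hii => hna (hii ▸ hv), hp⟩,
      fun ⟨hne, hp⟩ => ⟨hp, fun ha => hne (eq_of_alone_of_alone hv ha)⟩⟩
  rw [pendCount, hset, Finset.card_erase_of_mem (by simpa using hi), pendCount]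

end Histories

section StepProbabilities

variable (F : Fin n → Protocol)

lemma stepProb_nonneg {h : Hist n} (hF : ∀ i, 0 ≤ F i (personal h i) ∧ F i (personal h i) ≤ 1)
    (v : Fin n → Bool) : 0 ≤ stepProb F h v :=
  Finset.prod_nonneg fun i _ => by
    obtain ⟨h0, h1⟩ := hF i
    split_ifs <;> linarith

lemma sum_stepProb (h : Hist n) : ∑ v, stepProb F h v = 1 := by
  classical
  unfold stepProb
  rw [← Fintype.prod_sum (fun i b => if pending h i then
      (if b = true then F i (personal h i) else 1 - F i (personal h i))
    else if b = true then 0 else 1)]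
  exact Finset.prod_eq_one fun i _ => by by_cases hp : pending h i <;> simp [hp]

noncomputable def successProb (h : Hist n) : ℝ :=
  ∑ v with ∃ i, pending h i ∧ alone v i, stepProb F h v

lemma stepProb_indicator {h : Hist n} {r : ℝ} (hr : ∀ i, F i (personal h i) = r) {i : Fin n}
    (hi : pending h i) :
    stepProb F h (fun j => decide (j = i)) = r * (1 - r) ^ (pendCount h - 1) := by
  classical
  have hfactor : ∀ i', (if pending h i' then
      (if decide (i' = i) = true then F i' (personal h i') else 1 - F i' (personal h i'))
      else if decide (i' = i) = true then 0 else 1) =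
      if i' = i then r else if pending h i' then 1 - r else 1 := by
    intro i'
    by_cases hii : i' = i
    · subst hii; simp [hi, hr]
    · by_cases hp : pending h i' <;> simp [hii, hp, hr]
  unfold stepProb
  rw [Finset.prod_congr rfl fun i' _ => hfactor i',
    ← Finset.mul_prod_erase _ _ (Finset.mem_univ i), if_pos rfl,
    Finset.prod_congr rfl fun i' hi' => if_neg (Finset.ne_of_mem_erase hi'), Finset.prod_ite,
    Finset.prod_const_one, mul_one, Finset.prod_const, Finset.filter_erase,
    Finset.card_erase_of_mem (by simpa using hi), pendCount]

lemma pendCount_mul_le_successProb {h : Hist n} {r : ℝ} (hr0 : 0 ≤ r) (hr1 : r ≤ 1)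
    (hr : ∀ i, F i (personal h i) = r) :
    pendCount h * r * (1 - r) ^ (pendCount h - 1) ≤ successProb F h := by
  classical
  have hinj : Set.InjOn (fun i : Fin n => fun j => decide (j = i))
      (Finset.univ.filter fun i => pending h i) :=
    fun x _ y _ hxy => by simpa using congrFun hxy x
  calc (pendCount h : ℝ) * r * (1 - r) ^ (pendCount h - 1)
      = ∑ i with pending h i, stepProb F h (fun j => decide (j = i)) := by
        rw [Finset.sum_congr rfl fun i hi => stepProb_indicator F hr (by simpa using hi),
          Finset.sum_const, nsmul_eq_mul, pendCount, mul_assoc]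
    _ = ∑ v ∈ (Finset.univ.filter fun i => pending h i).image
          (fun i : Fin n => fun j => decide (j = i)), stepProb F h v :=
        (Finset.sum_image hinj).symm
    _ ≤ successProb F h := by
        refine Finset.sum_le_sum_of_subset_of_nonneg ?_
          fun v _ _ => stepProb_nonneg F (fun i => by rw [hr i]; exact ⟨hr0, hr1⟩) v
        intro v hv
        obtain ⟨i, hi, rfl⟩ := Finset.mem_image.1 hv
        simp only [Finset.mem_filter, Finset.mem_univ, true_and] at hi ⊢
        exact ⟨i, hi, by simp, fun j hj => by simp [hj]⟩

end StepProbabilities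

section Conditioning

variable (F : Fin n → Protocol)

lemma contProb_cons (h : Hist n) (v : Fin n → Bool) (e : Hist n) :
    contProb F h (v :: e) = stepProb F h v * contProb F (h ++ [v]) e := by
  unfold contProb
  rw [List.length_cons, Finset.prod_range_succ', mul_comm]
  simp

open Classical in
lemma condEvProb_zero (h : Hist n) (P : Hist n → Prop) :
    condEvProb F h 0 P = if P h then 1 else 0 := by
  unfold condEvProb
  rw [Fintype.sum_unique]
  simp [contProb]

open Classical in
lemma condEvProb_succ (h : Hist n) (s : ℕ) (P : Hist n → Prop) :
    condEvProb F h (s + 1) P = ∑ v, stepProb F h v * condEvProb F (h ++ [v]) s P := by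
  unfold condEvProb
  rw [← (Fin.consEquiv fun _ : Fin (s + 1) => Fin n → Bool).sum_comp, Fintype.sum_prod_type]
  refine Finset.sum_congr rfl fun v _ => ?_
  rw [Finset.mul_sum]
  refine Finset.sum_congr rfl fun e _ => ?_
  simp [Fin.consEquiv, List.ofFn_succ, contProb_cons, mul_ite]

/-- Markov's inequality for the supermartingale `V / c ^ t`. -/
lemma one_sub_mul_pow_le_condEvProb (P : Hist n → Prop) (V : Hist n → ℝ) {c : ℝ} (hc : 0 ≤ c)
    (hV0 : ∀ h, 0 ≤ V h) (hV1 : ∀ h, ¬ P h → 1 ≤ V h) (s : ℕ) (h : Hist n)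
    (hnonneg : ∀ e : Hist n, e.length < s → ∀ v, 0 ≤ stepProb F (h ++ e) v)
    (hdrift : ∀ e : Hist n, e.length < s →
      ∑ v, stepProb F (h ++ e) v * V (h ++ e ++ [v]) ≤ c * V (h ++ e)) :
    1 - V h * c ^ s ≤ condEvProb F h s P := by
  classical
  induction s generalizing h with
  | zero =>
    rw [condEvProb_zero]
    split_ifs with hP
    · linarith [hV0 h]
    · linarith [hV1 h hP]
  | succ s ih =>
    have hnext : ∀ v, 1 - V (h ++ [v]) * c ^ s ≤ condEvProb F (h ++ [v]) s P := fun v =>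
      ih (h ++ [v]) (fun e he => by simpa using hnonneg (v :: e) (by simpa using he))
        (fun e he => by simpa using hdrift (v :: e) (by simpa using he))
    have hstep := mul_le_mul_of_nonneg_left (by simpa using hdrift [] (by simp))
      (pow_nonneg hc s)
    calc 1 - V h * c ^ (s + 1) ≤ 1 - c ^ s * ∑ v, stepProb F h v * V (h ++ [v]) := by
          rw [pow_succ]; linarith
      _ = ∑ v, stepProb F h v * (1 - V (h ++ [v]) * c ^ s) := by
          simp only [mul_sub, mul_one, Finset.sum_sub_distrib, sum_stepProb, Finset.mul_sum]
          congr 1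
          exact Finset.sum_congr rfl fun v _ => by ring
      _ ≤ ∑ v, stepProb F h v * condEvProb F (h ++ [v]) s P :=
          Finset.sum_le_sum fun v _ =>
            mul_le_mul_of_nonneg_left (hnext v) (by simpa using hnonneg [] (by simp) v)
      _ = condEvProb F h (s + 1) P := (condEvProb_succ F h s P).symm

end Conditioning

section Potential

/-- `(1 - θ) ^ (T - m)` while `m > T` players are pending, so that every success multiplies
it by `1 - θ`; it vanishes once at most `T` players are pending. -/
noncomputable def pendPotential (θ T : ℝ) (h : Hist n) : ℝ :=
  if (pendCount h : ℝ) ≤ T then 0 else Real.exp (-Real.log (1 - θ) * (pendCount h - T))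

variable {θ T : ℝ}

lemma pendPotential_nonneg (h : Hist n) : 0 ≤ pendPotential θ T h := by
  unfold pendPotential
  split_ifs
  exacts [le_rfl, (Real.exp_pos _).le]

lemma pendPotential_le_exp (h : Hist n) :
    pendPotential θ T h ≤ Real.exp (-Real.log (1 - θ) * (pendCount h - T)) := by
  unfold pendPotential
  split_ifs
  exacts [(Real.exp_pos _).le, le_rfl]

lemma one_le_pendPotential (hθ0 : 0 ≤ θ) (hθ1 : θ ≤ 1) {h : Hist n}
    (hT : T < pendCount h) : 1 ≤ pendPotential θ T h := by
  rw [pendPotential, if_neg hT.not_ge]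
  exact Real.one_le_exp (mul_nonneg (neg_nonneg.2 (Real.log_nonpos (by linarith) (by linarith)))
    (by linarith))

lemma pendPotential_concat_le (hθ0 : 0 ≤ θ) (hθ1 : θ ≤ 1) (h : Hist n) (v : Fin n → Bool) :
    pendPotential θ T (h ++ [v]) ≤ pendPotential θ T h := by
  have hle : (pendCount (h ++ [v]) : ℝ) ≤ pendCount h := by
    exact_mod_cast pendCount_append_le h [v]
  unfold pendPotential
  split_ifs with h1 h2
  · exact le_rfl
  · exact (Real.exp_pos _).le
  · linarith
  · exact Real.exp_le_exp.2 (mul_le_mul_of_nonneg_left (by linarith)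
      (neg_nonneg.2 (Real.log_nonpos (by linarith) (by linarith))))

lemma pendPotential_concat_of_alone (hθ1 : θ < 1) {h : Hist n} {v : Fin n → Bool} {i : Fin n}
    (hi : pending h i) (hv : alone v i) :
    pendPotential θ T (h ++ [v]) ≤ (1 - θ) * pendPotential θ T h := by
  have hcount := pendCount_concat_of_alone hi hv
  have hpos : 1 ≤ pendCount h := Finset.card_pos.2 ⟨i, by simpa using hi⟩
  unfold pendPotential
  split_ifs with h1 h2
  · simp
  · exact mul_nonneg (by linarith) (Real.exp_pos _).le
  · rw [hcount, Nat.cast_sub hpos] at h1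
    push_cast at h1
    linarith
  · rw [hcount, Nat.cast_sub hpos, Nat.cast_one]
    refine le_of_eq ?_
    calc _ = Real.exp (Real.log (1 - θ)) * Real.exp (-Real.log (1 - θ) * (pendCount h - T)) := by
          rw [← Real.exp_add]; ring_nf
      _ = _ := by rw [Real.exp_log (by linarith)]

lemma sum_stepProb_mul_pendPotential_le (F : Fin n → Protocol) (hθ0 : 0 ≤ θ) (hθ1 : θ < 1)
    {q : ℝ} {h : Hist n} (hnonneg : ∀ v, 0 ≤ stepProb F h v)
    (hq : T < pendCount h → q ≤ successProb F h) :
    ∑ v, stepProb F h v * pendPotential θ T (h ++ [v]) ≤ (1 - θ * q) * pendPotential θ T h := by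
  classical
  by_cases hT : (pendCount h : ℝ) ≤ T
  · have hzero : ∀ h' : Hist n, pendCount h' ≤ pendCount h → pendPotential θ T h' = 0 :=
      fun h' hh' => if_pos (le_trans (by exact_mod_cast hh') hT)
    simp [hzero _ le_rfl, hzero _ (pendCount_append_le h _)]
  push Not at hT
  set V := pendPotential θ T h
  have hV : 0 ≤ V := pendPotential_nonneg h
  have htotal := sum_stepProb F h
  rw [← Finset.sum_filter_add_sum_filter_not Finset.univ
    (fun v => ∃ i, pending h i ∧ alone v i)] at htotal ⊢
  have hsucc : ∑ v with ∃ i, pending h i ∧ alone v i, stepProb F h v * pendPotential θ T (h ++ [v])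
      ≤ ∑ v with ∃ i, pending h i ∧ alone v i, stepProb F h v * ((1 - θ) * V) :=
    Finset.sum_le_sum fun v hv => by
      obtain ⟨i, hi, hvi⟩ := (Finset.mem_filter.1 hv).2
      exact mul_le_mul_of_nonneg_left (pendPotential_concat_of_alone hθ1 hi hvi) (hnonneg v)
  have hfail : ∑ v with ¬ ∃ i, pending h i ∧ alone v i,
        stepProb F h v * pendPotential θ T (h ++ [v])
      ≤ ∑ v with ¬ ∃ i, pending h i ∧ alone v i, stepProb F h v * V :=
    Finset.sum_le_sum fun v _ =>
      mul_le_mul_of_nonneg_left (pendPotential_concat_le hθ0 hθ1.le h v) (hnonneg v)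
  rw [← Finset.sum_mul] at hsucc hfail
  have hS := hq hT
  unfold successProb at hS
  nlinarith [mul_le_mul_of_nonneg_left hS (mul_nonneg hθ0 hV)]

end Potential

lemma one_sub_pendPotential_mul_pow_le_condEvProb (F : Fin n → Protocol) {β N : ℝ}
    (hβ0 : 0 < β) (hβ1 : β < 1) (hN : 1 < N) {h : Hist n} {s : ℕ}
    (hF : ∀ e : Hist n, e.length < s → ∀ i, F i (personal (h ++ e) i) = 1 / N)
    (hm : (pendCount h : ℝ) ≤ N) :
    1 - pendPotential β (β * N) h * (1 - β ^ 2 * Real.exp (-1)) ^ s ≤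
      condEvProb F h s (fun h' => (pendCount h' : ℝ) ≤ β * N) := by
  have hr : 0 ≤ 1 / N ∧ 1 / N ≤ 1 := ⟨by positivity, by rw [div_le_one] <;> linarith⟩
  have hnonneg : ∀ e : Hist n, e.length < s → ∀ v, 0 ≤ stepProb F (h ++ e) v :=
    fun e he => stepProb_nonneg F fun i => hF e he i ▸ hr
  refine one_sub_mul_pow_le_condEvProb F _ _ (one_sub_sq_mul_exp_neg_one_nonneg hβ0.le hβ1.le)
    pendPotential_nonneg (fun h' hh' => one_le_pendPotential hβ0.le hβ1.le (not_le.1 hh'))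
    s h hnonneg fun e he => ?_
  have hcount : (pendCount (h ++ e) : ℝ) ≤ N :=
    le_trans (by exact_mod_cast pendCount_append_le h e) hm
  have hsucc (hT : β * N < pendCount (h ++ e)) : β * Real.exp (-1) ≤ successProb F (h ++ e) :=
    calc β * Real.exp (-1)
        ≤ pendCount (h ++ e) / N * (1 - 1 / N) ^ (pendCount (h ++ e) - 1) :=
          mul_le_mul ((le_div_iff₀ (by linarith)).2 hT.le)
            (exp_neg_one_le_one_sub_one_div_pow hN hcount) (Real.exp_pos _).le (by positivity)
      _ ≤ successProb F (h ++ e) := by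
          rw [← mul_one_div]
          exact pendCount_mul_le_successProb F hr.1 hr.2 (hF e he)
  calc _ ≤ (1 - β * (β * Real.exp (-1))) * pendPotential β (β * N) (h ++ e) :=
        sum_stepProb_mul_pendPotential_le F hβ0.le hβ1 (hnonneg e he) hsucc
    _ = _ := by ring

section ProtocolQ

variable {β : ℝ} {k : ℕ}

lemma two_le_of_sqrt_lt_pow_mul (hβ0 : 0 ≤ β) (hβ1 : β ≤ 1) (h : Real.sqrt n < β ^ k * n) :
    2 ≤ n := by
  by_contra! hn
  interval_cases n
  · simp at h
  · simp only [Nat.cast_one, Real.sqrt_one, mul_one] at h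
    linarith [pow_le_one₀ hβ0 hβ1 (n := k)]

lemma one_lt_mul_of_sqrt_lt {N : ℝ} (hN : Real.sqrt n < N) (hNn : N ≤ β * n) : 1 < β * N := by
  have hN0 : 0 < N := lt_of_le_of_lt (Real.sqrt_nonneg _) hN
  have hnN : (n : ℝ) < N ^ 2 := (Real.sqrt_lt' hN0).1 hN
  nlinarith

lemma cumLen_sub_one_add {j : ℕ} (hj : 1 ≤ j) :
    cumLen β n k (j - 1) + intervalLen β n k j = cumLen β n k j := by
  obtain ⟨j, rfl⟩ := Nat.exists_eq_add_of_le' hj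
  simp [cumLen, Finset.sum_Icc_succ_top]

lemma sub_one_le_intervalLen {j : ℕ} (hjk : j ≤ k) :
    Real.exp 1 / β * nj β n j - 1 ≤ intervalLen β n k j := by
  rw [intervalLen, if_pos hjk]
  linarith [Nat.lt_floor_add_one (Real.exp 1 / β * nj β n j)]

lemma ageProtocol_personal_of_QSpec {p : ℕ → ℝ} (hQ : QSpec β n k p) {j : ℕ} (hj1 : 1 ≤ j)
    (hjk : j ≤ k + 1) {h : Hist n} (h1 : cumLen β n k (j - 1) ≤ h.length)
    (h2 : h.length < cumLen β n k j) (i : Fin n) :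
    ageProtocol p (personal h i) = 1 / nj β n j :=
  hQ.1 j hj1 hjk _ (by simp [personal]; omega) (by simp [personal]; omega)

end ProtocolQ

/-- Suppose all `n` players use protocol `Q`.  For any `j ∈ {1, …, k}`:
conditionally on any positive-probability joint history `h` reaching the start of interval
`Iⱼ` with at most `nⱼ` pending players, the probability that at the end of `Iⱼ` at most
`n_{j+1}` players are pending is at least `1 − exp(−β^{j+2}·n/3)`. -/
theorem interval_halving_lemma :
    ∀ (β : ℝ) (n k : ℕ) (p : ℕ → ℝ),
      0 < β → β < 1 →
      β ^ (k + 1) * n ≤ Real.sqrt n → Real.sqrt n < β ^ k * n →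
      QSpec β n k p →
      ∀ j : ℕ, 1 ≤ j → j ≤ k →
        ∀ h : Hist n, h.length = cumLen β n k (j - 1) →
          0 < histProb (fun _ : Fin n => ageProtocol p) h →
          (pendCount h : ℝ) ≤ nj β n j →
          1 - Real.exp (-(β ^ (j + 2) * n) / 3) ≤
            condEvProb (fun _ : Fin n => ageProtocol p) h (intervalLen β n k j)
              (fun h' => (pendCount h' : ℝ) ≤ nj β n (j + 1)) := by
  intro β n k p hβ0 hβ1 _ hk hQ j hj1 hjk h hlen _ hpend
  set N := nj β n j
  have hn := two_le_of_sqrt_lt_pow_mul hβ0.le hβ1.le hk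
  have hsqrt : Real.sqrt n < N :=
    hk.trans_le (mul_le_mul_of_nonneg_right (pow_le_pow_of_le_one hβ0.le hβ1.le hjk) n.cast_nonneg)
  have hNn : N ≤ β * n :=
    (mul_le_mul_of_nonneg_right (pow_le_pow_of_le_one hβ0.le hβ1.le hj1) n.cast_nonneg).trans_eq
      (by rw [pow_one])
  have hβN := one_lt_mul_of_sqrt_lt hsqrt hNn
  have hF (e : Hist n) (he : e.length < intervalLen β n k j) (i : Fin n) :
      ageProtocol p (personal (h ++ e) i) = 1 / N := by
    have := cumLen_sub_one_add (β := β) (n := n) (k := k) hj1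
    exact ageProtocol_personal_of_QSpec hQ hj1 (by omega) (by simp; omega) (by simp; omega) i
  have hgood := one_sub_pendPotential_mul_pow_le_condEvProb (fun _ => ageProtocol p) hβ0 hβ1
    (by nlinarith) hF hpend
  have hdecay := exp_mul_one_sub_pow_le hβ0 hβ1
    ((Real.sqrt_le_sqrt (by exact_mod_cast hn)).trans_lt hsqrt) hβN hpend
    (sub_one_le_intervalLen hjk)
  rw [show nj β n (j + 1) = β * N by simp only [N, nj]; ring,
    show β ^ (j + 2) * n = β ^ 2 * N by simp only [N, nj]; ring]
  refine le_trans ?_ hgood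
  have := mul_le_mul_of_nonneg_right (pendPotential_le_exp (θ := β) (T := β * N) h)
    (pow_nonneg (one_sub_sq_mul_exp_neg_one_nonneg hβ0.le hβ1.le) (intervalLen β n k j))
  linarith

end Contention
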